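/- In the tanh-network setting, the second moment of the gradient estimator is finite: for every θ ∈ Θ, E_z[‖∇_θ f(θ, z)‖²] < ∞, where ∇_θ f(θ, z) is the gradient of the loss with respect to all weights and biases for fixed input z. -/

import Mathlib

open MeasureTheory
open scoped BigOperators

noncomputable section

/-- Parameter space of an `n`-layer fully connected network with layer widths `κ`:
for each layer `i` a weight matrix `W_i ∈ ℝ^{κ(i+1) × κ i}` and a bias `b_i ∈ ℝ^{κ(i+1)}`. -/
abbrev NNParams (κ : ℕ → ℕ) (n : ℕ) :=
  (i : Fin n) → ((Fin (κ (i.1 + 1)) → Fin (κ i.1) → ℝ) × (Fin (κ (i.1 + 1)) → ℝ))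

/-- The layers of the tanh network: `x₀ = z`, `x_{i+1} = tanh(W_{i+1} x_i + b_{i+1})`
entrywise for the hidden layers `i + 1 ≤ n - 1`, and the affine output layer
`x_n = W_n x_{n-1} + b_n` (junk value `0` beyond layer `n`). -/
def tanhNet (κ : ℕ → ℕ) (n : ℕ) (θ : NNParams κ n) (z : Fin (κ 0) → ℝ) :
    (i : ℕ) → Fin (κ i) → ℝ
  | 0 => z
  | (i + 1) =>
    if h : i < n then
      fun j =>
        let pre := (∑ l, (θ ⟨i, h⟩).1 j l * tanhNet κ n θ z i l) + (θ ⟨i, h⟩).2 j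
        if i + 2 ≤ n then Real.tanh pre else pre
    else 0

/-- Squared-error loss `f(θ,z) = ‖x_n(θ,z) − f̂(z)‖²` of the tanh network. -/
def tanhLoss (κ : ℕ → ℕ) (n : ℕ) (fhat : (Fin (κ 0) → ℝ) → (Fin (κ n) → ℝ))
    (θ : NNParams κ n) (z : Fin (κ 0) → ℝ) : ℝ :=
  ∑ j, (tanhNet κ n θ z n j - fhat z j) ^ 2

/-- The standard Gaussian measure on `ℝ^d` (i.i.d. `N(0,1)` coordinates). -/
def stdGaussian (d : ℕ) : Measure (Fin d → ℝ) :=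
  Measure.pi fun _ => ProbabilityTheory.gaussianReal 0 1

/-!
By induction over the layers, every coordinate of the network and its derivative in the
parameters grow at most linearly in the input `z`: `tanh` and `tanh' = 1 - tanh²` are bounded by
`1`, and an affine map whose coefficients are parameters preserves linear growth. The gradient of
the loss is `∑ⱼ 2 (x_n j - f̂ z j) • ∇x_n j`, so its squared norm is at most
`C ((1 + ‖z‖)⁴ + (1 + ‖z‖)² ‖f̂ z‖²)`, which is integrable because Gaussian coordinates have all
moments and `‖f̂‖²`, `‖f̂‖² |z k|²` are integrable.
-/

theorem Real.hasDerivAt_tanh (x : ℝ) : HasDerivAt Real.tanh (1 - Real.tanh x ^ 2) x := by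
  have h := (Real.hasDerivAt_sinh x).div (Real.hasDerivAt_cosh x) (Real.cosh_pos x).ne'
  have hcosh := (Real.cosh_pos x).ne'
  have e : 1 - Real.tanh x ^ 2
      = (Real.cosh x * Real.cosh x - Real.sinh x * Real.sinh x) / Real.cosh x ^ 2 := by
    rw [Real.tanh_eq_sinh_div_cosh]
    field_simp
  rw [e, show Real.tanh = Real.sinh / Real.cosh from funext Real.tanh_eq_sinh_div_cosh]
  exact h

theorem Real.continuous_tanh : Continuous Real.tanh :=
  continuous_iff_continuousAt.2 fun x => (Real.hasDerivAt_tanh x).continuousAt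

theorem Real.abs_one_sub_tanh_sq_le_one (x : ℝ) : |1 - Real.tanh x ^ 2| ≤ 1 := by
  rw [abs_le]
  constructor <;> nlinarith [Real.tanh_sq_lt_one x, sq_nonneg (Real.tanh x)]

section LinearGrowth

variable {E Z : Type*} [NormedAddCommGroup E] [NormedSpace ℝ E] [NormedAddCommGroup Z]

def HasLinearGrowthFDerivAt (u : E → Z → ℝ) (θ : E) : Prop :=
  ∃ (D : Z → E →L[ℝ] ℝ) (c : ℝ), Continuous (u θ) ∧ Continuous D ∧
    (∀ z, HasFDerivAt (fun θ' => u θ' z) (D z) θ) ∧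
    ∀ z, |u θ z| ≤ c * (1 + ‖z‖) ∧ ‖D z‖ ≤ c * (1 + ‖z‖)

variable {u v : E → Z → ℝ} {θ : E}

theorem hasLinearGrowthFDerivAt_const {g : Z → ℝ} {c : ℝ} (hg : Continuous g)
    (hgc : ∀ z, |g z| ≤ c * (1 + ‖z‖)) : HasLinearGrowthFDerivAt (fun _ => g) θ := by
  refine ⟨0, max c 0, hg, continuous_const, fun z => hasFDerivAt_const _ _, fun z => ⟨?_, ?_⟩⟩
  · exact (hgc z).trans (by gcongr; exact le_max_left _ _)
  · simp only [Pi.zero_apply, norm_zero]; positivity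

theorem hasLinearGrowthFDerivAt_clm (p : E →L[ℝ] ℝ) :
    HasLinearGrowthFDerivAt (fun θ' (_ : Z) => p θ') θ := by
  have hc : 0 ≤ ‖p‖ * (1 + ‖θ‖) := by positivity
  refine ⟨fun _ => p, ‖p‖ * (1 + ‖θ‖), continuous_const, continuous_const,
    fun _ => p.hasFDerivAt, fun z => ?_⟩
  have hz : ‖p‖ * (1 + ‖θ‖) ≤ ‖p‖ * (1 + ‖θ‖) * (1 + ‖z‖) :=
    le_mul_of_one_le_right hc (by simp)
  constructor
  · calc |p θ| ≤ ‖p‖ * ‖θ‖ := p.le_opNorm θ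
      _ ≤ ‖p‖ * (1 + ‖θ‖) := by gcongr; linarith
      _ ≤ _ := hz
  · exact (le_mul_of_one_le_right (norm_nonneg p) (by simp)).trans hz

namespace HasLinearGrowthFDerivAt

theorem add (hu : HasLinearGrowthFDerivAt u θ) (hv : HasLinearGrowthFDerivAt v θ) :
    HasLinearGrowthFDerivAt (fun θ' z => u θ' z + v θ' z) θ := by
  obtain ⟨D, c, hu, hD, hdu, hbu⟩ := hu
  obtain ⟨D', c', hv, hD', hdv, hbv⟩ := hv
  refine ⟨D + D', c + c', hu.add hv, hD.add hD', fun z => (hdu z).add (hdv z), fun z => ⟨?_, ?_⟩⟩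
  · calc |u θ z + v θ z| ≤ |u θ z| + |v θ z| := abs_add_le _ _
      _ ≤ (c + c') * (1 + ‖z‖) := by linarith [(hbu z).1, (hbv z).1]
  · calc ‖D z + D' z‖ ≤ ‖D z‖ + ‖D' z‖ := norm_add_le _ _
      _ ≤ (c + c') * (1 + ‖z‖) := by linarith [(hbu z).2, (hbv z).2]

theorem sum {ι : Type*} (s : Finset ι) {u : ι → E → Z → ℝ}
    (hu : ∀ i ∈ s, HasLinearGrowthFDerivAt (u i) θ) :
    HasLinearGrowthFDerivAt (fun θ' z => ∑ i ∈ s, u i θ' z) θ := by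
  classical
  induction s using Finset.induction_on with
  | empty =>
    simp only [Finset.sum_empty]
    exact hasLinearGrowthFDerivAt_const continuous_const (c := 0) (by simp)
  | insert i s hi ih =>
    simp only [Finset.sum_insert hi]
    exact (hu i (s.mem_insert_self i)).add (ih fun j hj => hu j (Finset.mem_insert_of_mem hj))

theorem clm_mul (p : E →L[ℝ] ℝ) (hu : HasLinearGrowthFDerivAt u θ) :
    HasLinearGrowthFDerivAt (fun θ' z => p θ' * u θ' z) θ := by
  obtain ⟨D, c, hu, hD, hdu, hbu⟩ := hu
  refine ⟨fun z => p θ • D z + u θ z • p, |p θ| * c + c * ‖p‖, continuous_const.mul hu,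
    by fun_prop, fun z => p.hasFDerivAt.mul (hdu z), fun z => ⟨?_, ?_⟩⟩
  · rw [abs_mul]
    have := abs_nonneg (p θ); have := (hbu z).1; have := abs_nonneg (u θ z)
    have := norm_nonneg p; have := norm_nonneg z
    nlinarith
  · calc ‖p θ • D z + u θ z • p‖ ≤ |p θ| * ‖D z‖ + |u θ z| * ‖p‖ := by
          refine (norm_add_le _ _).trans (add_le_add ?_ ?_) <;> rw [norm_smul, Real.norm_eq_abs]
      _ ≤ |p θ| * (c * (1 + ‖z‖)) + c * (1 + ‖z‖) * ‖p‖ := by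
          gcongr
          · exact (hbu z).2
          · exact (hbu z).1
      _ = (|p θ| * c + c * ‖p‖) * (1 + ‖z‖) := by ring

theorem tanh (hu : HasLinearGrowthFDerivAt u θ) :
    HasLinearGrowthFDerivAt (fun θ' z => Real.tanh (u θ' z)) θ := by
  obtain ⟨D, c, hu, hD, hdu, hbu⟩ := hu
  refine ⟨fun z => (1 - Real.tanh (u θ z) ^ 2) • D z, max c 1,
    Real.continuous_tanh.comp hu,
    (continuous_const.sub ((Real.continuous_tanh.comp hu).pow 2)).smul hD,
    fun z => (Real.hasDerivAt_tanh _).comp_hasFDerivAt θ (hdu z), fun z => ⟨?_, ?_⟩⟩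
  · calc |Real.tanh (u θ z)| ≤ 1 := (Real.abs_tanh_lt_one _).le
      _ ≤ max c 1 * (1 + ‖z‖) := by
        have := le_max_right c 1; have := norm_nonneg z; nlinarith
  · rw [norm_smul, Real.norm_eq_abs]
    calc |1 - Real.tanh (u θ z) ^ 2| * ‖D z‖ ≤ 1 * ‖D z‖ := by
          gcongr; exact Real.abs_one_sub_tanh_sq_le_one _
      _ ≤ max c 1 * (1 + ‖z‖) := by
        rw [one_mul]
        exact (hbu z).2.trans (by gcongr; exact le_max_left _ _)

end HasLinearGrowthFDerivAt

end LinearGrowth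

section TanhNet

variable {κ : ℕ → ℕ} {n : ℕ}

def weightCLM (i : Fin n) (j : Fin (κ (i.1 + 1))) (l : Fin (κ i.1)) : NNParams κ n →L[ℝ] ℝ :=
  (ContinuousLinearMap.proj (R := ℝ) (φ := fun _ : Fin (κ i.1) => ℝ) l).comp
    ((ContinuousLinearMap.proj (R := ℝ) (φ := fun _ : Fin (κ (i.1 + 1)) => Fin (κ i.1) → ℝ) j).comp
      ((ContinuousLinearMap.fst ℝ _ _).comp (ContinuousLinearMap.proj (R := ℝ) i)))

def biasCLM (i : Fin n) (j : Fin (κ (i.1 + 1))) : NNParams κ n →L[ℝ] ℝ :=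
  (ContinuousLinearMap.proj (R := ℝ) (φ := fun _ : Fin (κ (i.1 + 1)) => ℝ) j).comp
    ((ContinuousLinearMap.snd ℝ _ _).comp (ContinuousLinearMap.proj (R := ℝ) i))

theorem tanhNet_succ (θ : NNParams κ n) (z : Fin (κ 0) → ℝ) {i : ℕ} (h : i < n)
    (j : Fin (κ (i + 1))) :
    tanhNet κ n θ z (i + 1) j =
      let pre := (∑ l, weightCLM ⟨i, h⟩ j l θ * tanhNet κ n θ z i l) + biasCLM ⟨i, h⟩ j θ
      if i + 2 ≤ n then Real.tanh pre else pre := by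
  simp only [tanhNet, dif_pos h]
  rfl

theorem hasLinearGrowthFDerivAt_tanhNet (θ : NNParams κ n) :
    ∀ i ≤ n, ∀ j : Fin (κ i), HasLinearGrowthFDerivAt (fun θ' z => tanhNet κ n θ' z i j) θ
  | 0, _, j => hasLinearGrowthFDerivAt_const (continuous_apply j) (c := 1) fun z => by
      rw [one_mul]
      exact (norm_le_pi_norm z j).trans (le_add_of_nonneg_left zero_le_one)
  | i + 1, h, j => by
    have hpre : HasLinearGrowthFDerivAt (fun θ' z =>
        (∑ l, weightCLM ⟨i, h⟩ j l θ' * tanhNet κ n θ' z i l) + biasCLM ⟨i, h⟩ j θ') θ :=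
      (HasLinearGrowthFDerivAt.sum _ fun l _ =>
        (hasLinearGrowthFDerivAt_tanhNet θ i (Nat.le_of_succ_le h) l).clm_mul _).add
        (hasLinearGrowthFDerivAt_clm _)
    simp only [tanhNet_succ _ _ h]
    split_ifs
    · exact hpre.tanh
    · exact hpre

end TanhNet

section SquaredLoss

variable {E : Type*} [NormedAddCommGroup E] [NormedSpace ℝ E] {ι : Type*} [Fintype ι]

theorem hasFDerivAt_sum_sq_sub {u : ι → E → ℝ} {D : ι → E →L[ℝ] ℝ} {θ : E} (y : ι → ℝ)
    (hu : ∀ j, HasFDerivAt (u j) (D j) θ) :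
    HasFDerivAt (fun θ' => ∑ j, (u j θ' - y j) ^ 2) (∑ j, (2 * (u j θ - y j)) • D j) θ :=
  HasFDerivAt.fun_sum fun j _ => by simpa using ((hu j).sub_const (y j)).pow 2

theorem norm_sum_two_mul_sub_smul_sq_le {F : Type*} [SeminormedAddCommGroup F] [NormedSpace ℝ F]
    {a y : ι → ℝ} {L : ι → F} {r : ℝ} (hr : 0 ≤ r) (ha : ∀ j, |a j| ≤ r) (hL : ∀ j, ‖L j‖ ≤ r) :
    ‖∑ j, (2 * (a j - y j)) • L j‖ ^ 2
      ≤ 8 * Fintype.card ι * r ^ 2 * (Fintype.card ι * r ^ 2 + ∑ j, y j ^ 2) := by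
  set m : ℝ := (Fintype.card ι : ℝ)
  have hnorm : ‖∑ j, (2 * (a j - y j)) • L j‖ ≤ 2 * r * (m * r + ∑ j, |y j|) := by
    calc ‖∑ j, (2 * (a j - y j)) • L j‖ ≤ ∑ j, 2 * r * (r + |y j|) := by
          refine (norm_sum_le _ _).trans (Finset.sum_le_sum fun j _ => ?_)
          rw [norm_smul, Real.norm_eq_abs, abs_mul, abs_two, mul_right_comm]
          gcongr
          · exact hL j
          · exact (abs_sub _ _).trans (by gcongr; exact ha j)
      _ = 2 * r * (m * r + ∑ j, |y j|) := by
          rw [← Finset.mul_sum, Finset.sum_add_distrib, Finset.sum_const, nsmul_eq_mul,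
            Finset.card_univ]
  have hcs : (∑ j, |y j|) ^ 2 ≤ m * ∑ j, y j ^ 2 := by
    simpa [sq_abs] using sq_sum_le_card_mul_sum_sq (s := Finset.univ) (f := fun j => |y j|)
  have hm : 0 ≤ m := Nat.cast_nonneg _
  calc ‖∑ j, (2 * (a j - y j)) • L j‖ ^ 2 ≤ (2 * r * (m * r + ∑ j, |y j|)) ^ 2 := by
        gcongr
    _ ≤ 4 * r ^ 2 * (2 * (m * r) ^ 2 + 2 * (∑ j, |y j|) ^ 2) := by
        rw [mul_pow, mul_pow]
        gcongr
        · norm_num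
        · nlinarith [sq_nonneg (m * r - ∑ j, |y j|)]
    _ ≤ 8 * m * r ^ 2 * (m * r ^ 2 + ∑ j, y j ^ 2) := by nlinarith [sq_nonneg r]

variable {Z : Type*} [NormedAddCommGroup Z] [MeasurableSpace Z] [OpensMeasurableSpace Z]
  [SecondCountableTopology Z] {μ : Measure Z}

theorem integrable_sq_norm_fderiv_sum_sq_sub {u : ι → E → Z → ℝ} {θ : E}
    (hu : ∀ j, HasLinearGrowthFDerivAt (u j) θ) {g : Z → ι → ℝ} (hg : Measurable g)
    (h4 : Integrable (fun z => (1 + ‖z‖) ^ 4) μ)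
    (h2 : Integrable (fun z => (1 + ‖z‖) ^ 2 * ∑ j, g z j ^ 2) μ) :
    Integrable (fun z => ‖fderiv ℝ (fun θ' => ∑ j, (u j θ' z - g z j) ^ 2) θ‖ ^ 2) μ := by
  choose D c hcont hDcont hderiv hbound using hu
  have hfderiv : ∀ z, fderiv ℝ (fun θ' => ∑ j, (u j θ' z - g z j) ^ 2) θ
      = ∑ j, (2 * (u j θ z - g z j)) • D j z :=
    fun z => (hasFDerivAt_sum_sq_sub (g z) fun j => hderiv j z).fderiv
  simp_rw [hfderiv]
  set C : ℝ := ∑ j, |c j|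
  set m : ℝ := (Fintype.card ι : ℝ)
  have hcC : ∀ j (z : Z), c j * (1 + ‖z‖) ≤ C * (1 + ‖z‖) := fun j z =>
    mul_le_mul_of_nonneg_right ((le_abs_self _).trans
      (Finset.single_le_sum (fun j _ => abs_nonneg (c j)) (Finset.mem_univ j))) (by positivity)
  have hmeas : StronglyMeasurable fun z => ∑ j, (2 * (u j θ z - g z j)) • D j z :=
    Finset.stronglyMeasurable_fun_sum _ fun j _ =>
      (((hcont j).measurable.sub ((measurable_pi_apply j).comp hg)).const_mul 2
        ).stronglyMeasurable.smul (hDcont j).stronglyMeasurable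
  refine ((h4.add h2).const_mul (8 * m * C ^ 2 * (m * C ^ 2 + 1))).mono'
    (hmeas.norm.pow 2).aestronglyMeasurable (Filter.Eventually.of_forall fun z => ?_)
  have hz : 0 ≤ 1 + ‖z‖ := by positivity
  rw [Real.norm_eq_abs, abs_of_nonneg (sq_nonneg _)]
  calc _ ≤ 8 * m * (C * (1 + ‖z‖)) ^ 2 * (m * (C * (1 + ‖z‖)) ^ 2 + ∑ j, g z j ^ 2) :=
        norm_sum_two_mul_sub_smul_sq_le (by positivity)
          (fun j => ((hbound j z).1).trans (hcC j z)) fun j => ((hbound j z).2).trans (hcC j z)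
    _ = 8 * m * C ^ 2 * (m * C ^ 2 * (1 + ‖z‖) ^ 4 + (1 + ‖z‖) ^ 2 * ∑ j, g z j ^ 2) := by
        ring
    _ ≤ 8 * m * C ^ 2 * ((m * C ^ 2 + 1) * ((1 + ‖z‖) ^ 4 + (1 + ‖z‖) ^ 2 * ∑ j, g z j ^ 2)) := by
        have h1 : 0 ≤ m * C ^ 2 := by positivity
        have h2 : 0 ≤ (1 + ‖z‖) ^ 2 * ∑ j, g z j ^ 2 := by positivity
        gcongr
        nlinarith [mul_nonneg h1 h2, pow_nonneg hz 4]
    _ = _ := by simp only [Pi.add_apply]; ring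

end SquaredLoss

section GaussianMoments

theorem pi_norm_sq_le_sum_sq {ι : Type*} [Fintype ι] (z : ι → ℝ) : ‖z‖ ^ 2 ≤ ∑ k, z k ^ 2 := by
  have hsum : 0 ≤ ∑ k, z k ^ 2 := Finset.sum_nonneg fun k _ => sq_nonneg _
  have : ‖z‖ ≤ √(∑ k, z k ^ 2) :=
    (pi_norm_le_iff_of_nonneg (Real.sqrt_nonneg _)).2 fun k =>
      Real.abs_le_sqrt (Finset.single_le_sum (fun k _ => sq_nonneg (z k)) (Finset.mem_univ k))
  calc ‖z‖ ^ 2 ≤ √(∑ k, z k ^ 2) ^ 2 := by gcongr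
    _ = ∑ k, z k ^ 2 := Real.sq_sqrt hsum

theorem integrable_one_add_norm_sq_mul {ι : Type*} [Fintype ι] {μ : Measure (ι → ℝ)}
    {F : (ι → ℝ) → ℝ} (hF : Integrable F μ) (hFz : ∀ k, Integrable (fun z => F z * |z k| ^ 2) μ) :
    Integrable (fun z => (1 + ‖z‖) ^ 2 * F z) μ := by
  have hsum := integrable_finsetSum Finset.univ fun k _ => (hFz k).norm
  refine ((hF.norm.add hsum).const_mul 2).mono'
    ((by fun_prop : Continuous fun z : ι → ℝ => (1 + ‖z‖) ^ 2).aestronglyMeasurable.mul hF.1)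
    (Filter.Eventually.of_forall fun z => ?_)
  have hnorm : (1 + ‖z‖) ^ 2 ≤ 2 * (1 + ∑ k, |z k| ^ 2) := by
    have := pi_norm_sq_le_sum_sq z
    simp only [sq_abs]
    nlinarith [sq_nonneg (1 - ‖z‖)]
  simp only [norm_mul, Real.norm_eq_abs, abs_pow, abs_abs, Pi.add_apply, ← Finset.mul_sum]
  rw [abs_of_nonneg (by positivity : (0 : ℝ) ≤ 1 + ‖z‖)]
  nlinarith [mul_le_mul_of_nonneg_right hnorm (abs_nonneg (F z))]

instance (d : ℕ) : IsProbabilityMeasure (stdGaussian d) := by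
  unfold stdGaussian; infer_instance

theorem memLp_id_stdGaussian (d : ℕ) (p : ENNReal) (hp : p ≠ ⊤) : MemLp id p (stdGaussian d) :=
  memLp_pi_iff.2 fun k =>
    (ProbabilityTheory.memLp_id_gaussianReal' p hp).comp_measurePreserving
      (measurePreserving_eval _ k)

theorem integrable_one_add_norm_pow_stdGaussian (d p : ℕ) :
    Integrable (fun z => (1 + ‖z‖) ^ p) (stdGaussian d) := by
  have h : MemLp (fun z : Fin d → ℝ => 1 + ‖z‖) p (stdGaussian d) :=
    (memLp_const (1 : ℝ)).add (memLp_id_stdGaussian d p (by simp)).norm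
  refine h.integrable_norm_pow'.congr (ae_of_all _ fun z => ?_)
  simp only [Real.norm_eq_abs, abs_of_nonneg (by positivity : (0 : ℝ) ≤ 1 + ‖z‖)]

end GaussianMoments

theorem stmt_8_general (κ : ℕ → ℕ) (n : ℕ)
    (fhat : (Fin (κ 0) → ℝ) → (Fin (κ n) → ℝ)) (hfhat : Measurable fhat)
    (hmom0 : Integrable (fun z => ∑ j, (fhat z j) ^ 2) (stdGaussian (κ 0)))
    (hmom2 : ∀ k : Fin (κ 0),
      Integrable (fun z => (∑ j, (fhat z j) ^ 2) * |z k| ^ 2) (stdGaussian (κ 0)))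
    (Θ : Set (NNParams κ n)) :
    ∀ θ ∈ Θ,
      Integrable (fun z => ‖fderiv ℝ (fun θ' => tanhLoss κ n fhat θ' z) θ‖ ^ 2)
        (stdGaussian (κ 0)) := fun θ _ =>
  integrable_sq_norm_fderiv_sum_sq_sub (hasLinearGrowthFDerivAt_tanhNet θ n le_rfl) hfhat
    (integrable_one_add_norm_pow_stdGaussian _ 4) (integrable_one_add_norm_sq_mul hmom0 hmom2)

/-- **Finite second moment of the gradient estimator for the tanh network
(Theorem 2.4, item 2).**  For every `θ ∈ Θ`, `E_z[‖∇_θ f(θ,z)‖²] < ∞`, where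
`∇_θ f(θ,z)` is the derivative of the loss with respect to all weights and biases
for fixed input `z`. -/
theorem stmt_8 (κ : ℕ → ℕ) (n : ℕ) (hn : 1 ≤ n)
    (fhat : (Fin (κ 0) → ℝ) → (Fin (κ n) → ℝ)) (hfhat : Measurable fhat)
    (hmom0 : Integrable (fun z => ∑ j, (fhat z j) ^ 2) (stdGaussian (κ 0)))
    (hmom1 : ∀ k : Fin (κ 0),
      Integrable (fun z => (∑ j, (fhat z j) ^ 2) * |z k|) (stdGaussian (κ 0)))
    (hmom2 : ∀ k : Fin (κ 0),
      Integrable (fun z => (∑ j, (fhat z j) ^ 2) * |z k| ^ 2) (stdGaussian (κ 0)))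
    (Θ : Set (NNParams κ n)) (hΘb : Bornology.IsBounded Θ) (hΘc : Convex ℝ Θ) :
    ∀ θ ∈ Θ,
      Integrable (fun z => ‖fderiv ℝ (fun θ' => tanhLoss κ n fhat θ' z) θ‖ ^ 2)
        (stdGaussian (κ 0)) :=
  stmt_8_general κ n fhat hfhat hmom0 hmom2 Θ
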